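/- arXiv:1103.1182 — 2 statements merged into one kernel-verified Lean document; each statement's English description precedes it below -/
import Mathlib

section
/- For r ≥ 7 with r ≡ ±1 (mod 8), and with N_i^j = {(l1,l2,l3,l4,l5) ∈ N_i : l1 + l2 + l3 ≡ j (mod 2)}, one has for j = 0: #N_i^0 − #N_{i-2}^1 = #{(0,0,0,l4,l5) ∈ N_i} + #{(1,1,0,l4,l5) ∈ N_i}, where N_{i-2}^1 is taken to be empty if i < 2. -/
/-- The set N_i of exponent tuples (l1,l2,l3,l4,l5). -/
def Nset (r i : ℕ) : Set (ℕ × ℕ × ℕ × ℕ × ℕ) :=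
  {l | (r + 1) / 2 * l.1 + (r - 1) / 2 * l.2.1 + 2 * l.2.2.1 + l.2.2.2.1 + r * l.2.2.2.2 = i
    ∧ l.1 ≤ 1 ∧ l.2.1 ≤ 1}

/-- The parity part N_i^j, where l1 + l2 + l3 ≡ j (mod 2). -/
def Npart (r i j : ℕ) : Set (ℕ × ℕ × ℕ × ℕ × ℕ) :=
  {l | l ∈ Nset r i ∧ (l.1 + l.2.1 + l.2.2.1) % 2 = j}

/-- Translation adding (0,0,1,0,0). -/
def shift3 (l : ℕ × ℕ × ℕ × ℕ × ℕ) : ℕ × ℕ × ℕ × ℕ × ℕ :=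
  (l.1, l.2.1, l.2.2.1 + 1, l.2.2.2.1, l.2.2.2.2)

lemma Nset_finite (r i : ℕ) (hr : 7 ≤ r) : (Nset r i).Finite := by
  apply Set.Finite.subset ((Set.finite_Iic i).prod ((Set.finite_Iic i).prod
    ((Set.finite_Iic i).prod ((Set.finite_Iic i).prod (Set.finite_Iic i)))))
  rintro ⟨a, b, c, d, e⟩ ⟨heq, ha, hb⟩
  simp only [Nset, Set.mem_setOf_eq] at heq
  have h1 : a ≤ (r + 1) / 2 * a := Nat.le_mul_of_pos_left a (by omega)
  have h2 : b ≤ (r - 1) / 2 * b := Nat.le_mul_of_pos_left b (by omega)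
  have h3 : e ≤ r * e := Nat.le_mul_of_pos_left e (by omega)
  simp only [Set.mem_prod, Set.mem_Iic]
  omega

lemma shift3_inj : Function.Injective shift3 := by
  rintro ⟨a, b, c, d, e⟩ ⟨a', b', c', d', e'⟩ h
  simp only [shift3, Prod.mk.injEq] at h
  simp_all

theorem stmt2 (r : ℕ) (hr : 7 ≤ r) (hmod : r % 8 = 1 ∨ r % 8 = 7) (i : ℕ) :
    (Npart r i 0).ncard =
      (if 2 ≤ i then (Npart r (i - 2) 1).ncard else 0) +
        {l ∈ Nset r i | l.1 = 0 ∧ l.2.1 = 0 ∧ l.2.2.1 = 0}.ncard +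
        {l ∈ Nset r i | l.1 = 1 ∧ l.2.1 = 1 ∧ l.2.2.1 = 0}.ncard := by
  classical
  have hfin : (Nset r i).Finite := Nset_finite r i hr
  set A : Set (ℕ × ℕ × ℕ × ℕ × ℕ) := {l ∈ Npart r i 0 | 1 ≤ l.2.2.1} with hA
  set B : Set (ℕ × ℕ × ℕ × ℕ × ℕ) :=
    {l ∈ Nset r i | l.1 = 0 ∧ l.2.1 = 0 ∧ l.2.2.1 = 0} with hB
  set C : Set (ℕ × ℕ × ℕ × ℕ × ℕ) :=
    {l ∈ Nset r i | l.1 = 1 ∧ l.2.1 = 1 ∧ l.2.2.1 = 0} with hC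
  have hAfin : A.Finite := hfin.subset (fun l hl => hl.1.1)
  have hBfin : B.Finite := hfin.subset (fun l hl => hl.1)
  have hCfin : C.Finite := hfin.subset (fun l hl => hl.1)
  have hunion : Npart r i 0 = A ∪ (B ∪ C) := by
    ext ⟨a, b, c, d, e⟩
    simp only [hA, hB, hC, Npart, Nset, Set.mem_setOf_eq, Set.mem_union, Set.mem_sep_iff]
    omega
  have hdisj : Disjoint A (B ∪ C) := by
    rw [Set.disjoint_union_right]
    constructor <;>
    · rw [Set.disjoint_left]
      rintro ⟨a, b, c, d, e⟩ hl hl'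
      simp only [hA, hB, hC, Set.mem_setOf_eq, Set.mem_sep_iff] at hl hl'
      omega
  have hdisjBC : Disjoint B C := by
    rw [Set.disjoint_left]
    rintro ⟨a, b, c, d, e⟩ hl hl'
    simp only [hB, hC, Set.mem_setOf_eq, Set.mem_sep_iff] at hl hl'
    omega
  have hcard : (Npart r i 0).ncard = A.ncard + (B.ncard + C.ncard) := by
    rw [hunion, Set.ncard_union_eq hdisj hAfin (hBfin.union hCfin),
      Set.ncard_union_eq hdisjBC hBfin hCfin]
  rw [hcard]
  have hAcard : A.ncard = if 2 ≤ i then (Npart r (i - 2) 1).ncard else 0 := by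
    by_cases hi : 2 ≤ i
    · rw [if_pos hi]
      have himg : A = shift3 '' Npart r (i - 2) 1 := by
        ext ⟨a, b, c, d, e⟩
        constructor
        · rintro ⟨⟨⟨heq, ha, hb⟩, hp⟩, hc⟩
          dsimp only at heq ha hb hp hc
          refine ⟨(a, b, c - 1, d, e), ⟨⟨?_, ha, hb⟩, ?_⟩, ?_⟩
          · show _ = i - 2
            dsimp only
            omega
          · show (a + b + (c - 1)) % 2 = 1
            omega
          · simp only [shift3]
            have hc1 : c - 1 + 1 = c := by omega
            rw [hc1]
        · rintro ⟨⟨a', b', c', d', e'⟩, ⟨⟨heq, ha, hb⟩, hp⟩, himg⟩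
          simp only [shift3, Prod.mk.injEq] at himg
          obtain ⟨rfl, rfl, h3, rfl, rfl⟩ := himg
          dsimp only at heq ha hb hp
          refine ⟨⟨⟨?_, ha, hb⟩, ?_⟩, ?_⟩ <;> first | (dsimp only; omega) | omega
      rw [himg, Set.ncard_image_of_injective _ shift3_inj]
    · rw [if_neg hi]
      have : A = ∅ := by
        ext ⟨a, b, c, d, e⟩
        simp only [hA, Npart, Nset, Set.mem_setOf_eq, Set.mem_sep_iff, Set.mem_empty_iff_false,
          iff_false]
        rintro ⟨⟨⟨heq, ha, hb⟩, hp⟩, hc⟩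
        omega
      rw [this, Set.ncard_empty]
  rw [hAcard]
  ring
end

section
/- For r ≥ 7 with r ≡ ±1 (mod 8), the filtration inequality holds: for all i ≥ 0 and j ∈ {0,1}, #N_i^j ≥ #N_{i-2}^{1-j} (with N_{i-2}^{1-j} empty for i < 2), i.e., the map (l1,l2,l3,l4,l5) ↦ (l1,l2,l3+1,l4,l5) is an injection from N_{i-2}^{1-j} into N_i^j. -/
lemma Npart_finite (r i j : ℕ) (hr : 1 ≤ r) : (Npart r i j).Finite := by
  apply Set.Finite.subset
    ((Set.finite_Iic 1).prod ((Set.finite_Iic 1).prod ((Set.finite_Iic i).prod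
      ((Set.finite_Iic i).prod (Set.finite_Iic i)))))
  rintro ⟨l1, l2, l3, l4, l5⟩ ⟨⟨heq, h1, h2⟩, -⟩
  simp only [Set.mem_prod, Set.mem_Iic]
  have h5 : l5 ≤ r * l5 := Nat.le_mul_of_pos_left l5 hr
  simp only at heq h1 h2
  generalize (r + 1) / 2 * l1 = a at heq
  generalize (r - 1) / 2 * l2 = b at heq
  generalize r * l5 = c at heq h5
  refine ⟨h1, h2, ?_, ?_, ?_⟩ <;> omega

lemma shift3_maps (r : ℕ) (hr : 7 ≤ r) (i j : ℕ) (hj : j ≤ 1) (hi : 2 ≤ i) :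
    ∀ l ∈ Npart r (i - 2) (1 - j), shift3 l ∈ Npart r i j := by
  rintro ⟨l1, l2, l3, l4, l5⟩ ⟨⟨heq, h1, h2⟩, hp⟩
  simp only [Npart, Nset, shift3, Set.mem_setOf_eq] at *
  generalize (r + 1) / 2 * l1 = a at heq
  generalize (r - 1) / 2 * l2 = b at heq
  generalize r * l5 = c at heq
  refine ⟨⟨by omega, h1, h2⟩, by omega⟩

theorem stmt18 (r : ℕ) (hr : 7 ≤ r) (hmod : r % 8 = 1 ∨ r % 8 = 7) :
    (∀ i j : ℕ, j ≤ 1 →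
      (if 2 ≤ i then (Npart r (i - 2) (1 - j)).ncard else 0) ≤ (Npart r i j).ncard) ∧
    ∀ i j : ℕ, j ≤ 1 → 2 ≤ i →
      Set.InjOn shift3 (Npart r (i - 2) (1 - j)) ∧
      shift3 '' Npart r (i - 2) (1 - j) ⊆ Npart r i j := by
  constructor
  · intro i j hj
    split_ifs with hi
    · exact Set.ncard_le_ncard_of_injOn shift3 (shift3_maps r hr i j hj hi)
        (shift3_inj.injOn) (Npart_finite r i j (by omega))
    · exact Nat.zero_le _
  · intro i j hj hi
    refine ⟨shift3_inj.injOn, ?_⟩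
    rintro x ⟨l, hl, rfl⟩
    exact shift3_maps r hr i j hj hi l hl
end
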